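/- arXiv:2210.03891 — 2 statements merged into one kernel-verified Lean document; each statement's English description precedes it below -/
import Mathlib

section
/- Let R be a commutative Noetherian ring and let M be a finitely generated R-submodule of the total ring of fractions Q(R) containing the image of a non-zero-divisor of R. Then the trace ideal Tr_R(M) equals the intersection, taken over all integers i ≥ 1 and all (not necessarily finitely generated) R-modules N, of the annihilators ann_R Ext^i_R(M, N). -/
/-!
Both sides are the ideal of those `r` for which `r • 𝟙_M` factors through a projective module.

For the trace: since `M ⊆ Q(R)`, every `f : M → R` satisfies `f a • b = f b • a`, so `f a • 𝟙_M`
is `m ↦ f m • a`, which factors through `R`. Conversely, expanding a factorization through a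
projective module in a dual basis and evaluating it at the regular element `c ∈ M` gives
`r • c = (∑ fₚ xₚ) • c` with `fₚ : M → R`, and `c` can be cancelled.

For Ext: if `r • 𝟙_M` factors through a projective, then `r • 𝟙` on a projective resolution `P`
is homotopic to a chain map vanishing in positive degrees, so `r` kills every `Ext^(n+1)`.
Conversely, if `r` kills the class of `P₁ → K := ker (P₀ → M)` in `Ext¹(M, K)`, then
`r • 𝟙_{P₀}` can be corrected by a map `P₀ → K` to vanish on `K`, hence descends to `M → P₀`.
-/

open CategoryTheory Opposite

universe u

noncomputable def traceIdeal (R : Type u) [CommRing R] (M : Type u)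
    [AddCommGroup M] [Module R M] : Ideal R :=
  ⨆ f : M →ₗ[R] R, LinearMap.range f

namespace Submodule

variable {R K : Type u} [CommRing R] [CommRing K] [Algebra R K] (M : Submodule R K)

theorem linearMap_apply_mul_comm (S : Submonoid R) [IsLocalization S K] (f : M →ₗ[R] K)
    (a b : M) : f a * (b : K) = f b * (a : K) := by
  obtain ⟨⟨x, s⟩, hx⟩ := IsLocalization.surj S (a : K)
  obtain ⟨⟨y, t⟩, hy⟩ := IsLocalization.surj S (b : K)
  have hsa : ((s : R) • a : K) = algebraMap R K x := by rw [Algebra.smul_def, mul_comm, hx]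
  have htb : ((t : R) • b : K) = algebraMap R K y := by rw [Algebra.smul_def, mul_comm, hy]
  have hxy : y • (s : R) • a = x • (t : R) • b := by
    ext
    simp only [coe_smul, Algebra.smul_def] at hsa htb ⊢
    rw [hsa, htb, mul_comm]
  apply (IsLocalization.map_units K (s * t)).mul_left_cancel
  calc algebraMap R K ↑(s * t) * (f a * b)
      = algebraMap R K y * f ((s : R) • a) := by
        rw [map_smul, ← htb]
        simp only [Submonoid.coe_mul, map_mul, Algebra.smul_def]
        ring
    _ = algebraMap R K x * f ((t : R) • b) := by
        rw [← Algebra.smul_def, ← map_smul, hxy, map_smul, Algebra.smul_def]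
    _ = algebraMap R K ↑(s * t) * (f b * a) := by
        rw [map_smul, ← hsa]
        simp only [Submonoid.coe_mul, map_mul, Algebra.smul_def]
        ring

theorem dual_apply_smul_comm (S : Submonoid R) [IsLocalization S K] (f : M →ₗ[R] R)
    (a b : M) : f a • b = f b • a := by
  ext
  simpa [Algebra.smul_def] using M.linearMap_apply_mul_comm S (Algebra.linearMap R K ∘ₗ f) a b

theorem smul_left_injective_of_isUnit {S : Submonoid R} [IsLocalization S K]
    (hS : S ≤ nonZeroDivisors R) {c : M} (hc : IsUnit (c : K)) :
    Function.Injective fun r : R => r • c := by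
  intro r t h
  have h' : algebraMap R K r * c = algebraMap R K t * c := by
    simpa only [Subtype.ext_iff, coe_smul, Algebra.smul_def] using h
  exact IsLocalization.injective K hS (hc.mul_right_cancel h')

theorem mem_traceIdeal_of_smul_id_factors_projective (S : Submonoid R) [IsLocalization S K]
    (hS : S ≤ nonZeroDivisors R) {c : M} (hc : IsUnit (c : K)) {r : R} {P : Type*}
    [AddCommGroup P] [Module R P] [Module.Projective R P] (u : M →ₗ[R] P) (v : P →ₗ[R] M)
    (huv : ∀ m, v (u m) = r • m) : r ∈ traceIdeal R M := by
  obtain ⟨s, hs⟩ := Module.projective_def'.mp ‹Module.Projective R P›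
  let w (p : P) : M →ₗ[R] R := Finsupp.lapply p ∘ₗ s ∘ₗ u
  let t := ∑ p ∈ (s (u c)).support, w p (v p)
  have hrc : r • c = t • c := calc
    r • c = v (Finsupp.linearCombination R id (s (u c))) := by
      rw [← huv c, ← LinearMap.comp_apply _ s, hs, LinearMap.id_apply]
    _ = ∑ p ∈ (s (u c)).support, w p c • v p := by
      simp [Finsupp.linearCombination_apply, Finsupp.sum, w]
    _ = t • c := by
      simp only [t, Finset.sum_smul, M.dual_apply_smul_comm S]
  rw [M.smul_left_injective_of_isUnit hS hc hrc]
  exact Ideal.sum_mem _ fun p _ => le_iSup (fun f : M →ₗ[R] R => LinearMap.range f) (w p) ⟨v p, rfl⟩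

end Submodule

namespace CategoryTheory

variable {R : Type*} [Ring R] {C : Type*} [Category C] [Abelian C] [Linear R C] {X : C}

namespace ProjectiveResolution

variable (P : ProjectiveResolution X)

theorem exists_smul_id_eq_d_comp_add_comp_d {r : R} {Q : C} [Projective Q] (u : X ⟶ Q)
    (v : Q ⟶ X) (huv : u ≫ v = r • 𝟙 X) (n : ℕ) :
    ∃ (η : P.complex.X n ⟶ P.complex.X (n + 1)) (ζ : P.complex.X (n + 1) ⟶ P.complex.X (n + 2)),
      r • 𝟙 (P.complex.X (n + 1)) =
        P.complex.d (n + 1) n ≫ η + ζ ≫ P.complex.d (n + 2) (n + 1) := by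
  let π₀ : P.complex.X 0 ⟶ X := P.π.f 0
  have : Epi π₀ := inferInstanceAs (Epi (P.π.f 0))
  obtain ⟨w, hw⟩ := Projective.factors v π₀
  let β := P.π ≫ (ChainComplex.fromSingle₀Equiv P.complex X).symm (u ≫ w)
  have hα : (r • 𝟙 P.complex) ≫ P.π = P.π ≫ (ChainComplex.single₀ C).map (r • 𝟙 X) := by
    have : π₀ ≫ (r • 𝟙 X) = r • π₀ := by simp
    ext
    simp only [ChainComplex.single₀_obj_zero, Linear.smul_comp, Category.id_comp,
      HomologicalComplex.smul_f_apply, HomologicalComplex.comp_f, ChainComplex.single₀_map_f_zero]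
    exact this.symm
  have hβ : β ≫ P.π = P.π ≫ (ChainComplex.single₀ C).map (r • 𝟙 X) := by
    have : π₀ ≫ (u ≫ w) ≫ π₀ = π₀ ≫ (r • 𝟙 X) := by rw [Category.assoc, hw, huv]
    ext
    simp only [ChainComplex.single₀_obj_zero, Category.assoc, HomologicalComplex.comp_f,
      ChainComplex.fromSingle₀Equiv_symm_apply_f_zero, ChainComplex.single₀_map_f_zero, β]
    exact this
  let h := liftHomotopy (r • 𝟙 X) (r • 𝟙 P.complex) β hα hβ
  refine ⟨h.hom n (n + 1), h.hom (n + 1) (n + 2), ?_⟩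
  have := h.comm (n + 1)
  rw [Homotopy.dNext_succ_chainComplex, Homotopy.prevD_chainComplex] at this
  simpa [β] using this

theorem forall_smul_ext_eq_zero_iff [EnoughProjectives C] (n : ℕ) (N : C) (r : R) :
    (∀ x : ((Ext R C (n + 1)).obj (op X)).obj N, r • x = 0) ↔
      ∀ z : P.complex.X (n + 1) ⟶ N, P.complex.d (n + 2) (n + 1) ≫ z = 0 →
        ∃ η : P.complex.X n ⟶ N, P.complex.d (n + 1) n ≫ η = r • z := by
  let K := P.complex.linearYonedaObj R N
  let S := K.sc' n (n + 1) (n + 2)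
  let E := (P.isoExt (n + 1) N ≪≫ K.homologyIsoSc' n (n + 1) (n + 2) (by simp) (by simp) ≪≫
    S.moduleCatHomologyIso).toLinearEquiv
  have hE : (∀ x : ((Ext R C (n + 1)).obj (op X)).obj N, r • x = 0) ↔
      ∀ h : LinearMap.ker S.g.hom ⧸ LinearMap.range S.moduleCatToCycles, r • h = 0 :=
    (forall_congr' fun x => by rw [← E.map_eq_zero_iff, map_smul]; exact Iff.rfl).trans
      E.surjective.forall.symm
  rw [hE, (Submodule.Quotient.mk_surjective _).forall, Subtype.forall]
  simp only [← Submodule.Quotient.mk_smul, Submodule.Quotient.mk_eq_zero, LinearMap.mem_range,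
    LinearMap.mem_ker, Subtype.ext_iff]
  exact Iff.rfl

end ProjectiveResolution

variable [EnoughProjectives C]

theorem smul_ext_succ_eq_zero_of_smul_id_factors_projective {r : R} {Q : C} [Projective Q]
    (u : X ⟶ Q) (v : Q ⟶ X) (huv : u ≫ v = r • 𝟙 X) (n : ℕ) (N : C)
    (x : ((Ext R C (n + 1)).obj (op X)).obj N) : r • x = 0 := by
  let P := ProjectiveResolution.of X
  refine (P.forall_smul_ext_eq_zero_iff n N r).2 (fun z hz => ?_) x
  obtain ⟨η, ζ, h⟩ := P.exists_smul_id_eq_d_comp_add_comp_d u v huv n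
  refine ⟨η ≫ z, ?_⟩
  calc P.complex.d (n + 1) n ≫ η ≫ z
      = (P.complex.d (n + 1) n ≫ η + ζ ≫ P.complex.d (n + 2) (n + 1)) ≫ z := by simp [hz]
    _ = r • z := by rw [← h, Linear.smul_comp, Category.id_comp]

theorem exists_smul_id_factors_projective_of_smul_ext_one_eq_zero {r : R}
    (hr : ∀ (N : C) (x : ((Ext R C 1).obj (op X)).obj N), r • x = 0) :
    ∃ (Q : C) (_ : Projective Q) (u : X ⟶ Q) (v : Q ⟶ X), u ≫ v = r • 𝟙 X := by
  let P := ProjectiveResolution.of X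
  let π₀ : P.complex.X 0 ⟶ X := P.π.f 0
  have : Epi π₀ := inferInstanceAs (Epi (P.π.f 0))
  let ξ : P.complex.X 1 ⟶ Limits.kernel π₀ :=
    Limits.kernel.lift _ (P.complex.d 1 0) P.complex_d_comp_π_f_zero
  have hξι : ξ ≫ Limits.kernel.ι π₀ = P.complex.d 1 0 := Limits.kernel.lift_ι _ _ _
  have hξ : P.complex.d 2 1 ≫ ξ = 0 := by
    rw [← cancel_mono (Limits.kernel.ι π₀), Category.assoc, hξι,
      HomologicalComplex.d_comp_d, Limits.zero_comp]
  obtain ⟨ψ, hψ⟩ := (P.forall_smul_ext_eq_zero_iff 0 _ r).1 (hr _) ξ hξ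
  let θ := r • 𝟙 (P.complex.X 0) - ψ ≫ Limits.kernel.ι π₀
  have hθ : P.complex.d 1 0 ≫ θ = 0 := by
    rw [Preadditive.comp_sub, Linear.comp_smul, Category.comp_id, ← Category.assoc, hψ,
      Linear.smul_comp, hξι, sub_self]
  obtain ⟨τ, hτ⟩ : ∃ τ : X ⟶ P.complex.X 0, π₀ ≫ τ = θ :=
    let ⟨τ, hτ⟩ := Limits.CokernelCofork.IsColimit.desc' P.isColimitCokernelCofork θ hθ
    ⟨τ, hτ⟩
  refine ⟨P.complex.X 0, inferInstance, τ, π₀, (cancel_epi π₀).1 ?_⟩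
  rw [← Category.assoc, hτ]
  simp [θ]

end CategoryTheory

theorem trace_eq_iInf_ann_ext_general (R : Type u) [CommRing R]
    (M : Submodule R (Localization (nonZeroDivisors R)))
    (hreg : ∃ r ∈ nonZeroDivisors R,
      algebraMap R (Localization (nonZeroDivisors R)) r ∈ M) :
    traceIdeal R ↥M =
      ⨅ (i : ℕ) (_ : 1 ≤ i) (N : ModuleCat.{u} R),
        Module.annihilator R
          (((Ext R (ModuleCat.{u} R) i).obj (op (ModuleCat.of R ↥M))).obj N) := by
  obtain ⟨r₀, hr₀, hr₀M⟩ := hreg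
  apply le_antisymm
  · refine iSup_le fun f => ?_
    rintro _ ⟨a, rfl⟩
    simp only [Submodule.mem_iInf, Module.mem_annihilator]
    intro i hi N x
    obtain ⟨n, rfl⟩ := Nat.exists_eq_add_of_le' hi
    refine smul_ext_succ_eq_zero_of_smul_id_factors_projective (ModuleCat.ofHom f)
      (ModuleCat.ofHom (LinearMap.toSpanSingleton R M a)) ?_ n N x
    ext m : 2
    simpa using M.dual_apply_smul_comm (nonZeroDivisors R) f m a
  · intro r hr
    simp only [Submodule.mem_iInf, Module.mem_annihilator] at hr
    obtain ⟨Q, _, u, v, huv⟩ :=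
      exists_smul_id_factors_projective_of_smul_ext_one_eq_zero (hr 1 le_rfl)
    exact M.mem_traceIdeal_of_smul_id_factors_projective (nonZeroDivisors R) le_rfl
      (c := ⟨_, hr₀M⟩) (IsLocalization.map_units _ ⟨r₀, hr₀⟩) u.hom v.hom
      fun m => congr($huv m)

/-- Let `R` be a commutative Noetherian ring and `M` a finitely generated `R`-submodule of the
total ring of fractions `Q(R)` containing the image of a non-zero-divisor of `R`.  Then the trace
ideal of `M` equals the intersection, over all `i ≥ 1` and all `R`-modules `N`, of the
annihilators of `Ext^i_R(M, N)`. -/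
theorem trace_eq_iInf_ann_ext (R : Type u) [CommRing R] [IsNoetherianRing R]
    (M : Submodule R (Localization (nonZeroDivisors R)))
    (hfg : M.FG)
    (hreg : ∃ r ∈ nonZeroDivisors R,
      algebraMap R (Localization (nonZeroDivisors R)) r ∈ M) :
    traceIdeal R ↥M =
      ⨅ (i : ℕ) (_ : 1 ≤ i) (N : ModuleCat.{u} R),
        Module.annihilator R
          (((Ext R (ModuleCat.{u} R) i).obj (op (ModuleCat.of R ↥M))).obj N) :=
  trace_eq_iInf_ann_ext_general R M hreg
end

section
/- Let R be a commutative Noetherian ring, M a finitely generated R-module, and let P₁ →f→ P₀ → M → 0 be an exact sequence with P₁, P₀ finitely generated projective R-modules; let Tr M = coker(f* : Hom_R(P₀,R) → Hom_R(P₁,R)). Then ann_R Tor_1^R(M, Tr M) equals the set {x ∈ R : the multiplication map x·id_M : M → M factors through some finitely generated free R-module}. -/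
/-!
Compute `Tor₁(M, Tr M)` with a projective resolution of `Tr M` that starts with
`f* : P₀* → P₁*`. Its cycles are `ker (M ⊗ f*)`, and since `0 → M* → P₀* → P₁*` is exact its
boundaries are the image of `M ⊗ M*`. For finitely generated projective `P` the natural map
`M ⊗ P* → Hom(P, M)` is bijective; under it the cycles become the maps `P₀ → M` killing the
image of `f`, i.e. the maps `h ∘ g` with `h ∈ End M`, and the boundaries become the maps `k ∘ g`
with `k` in the image of `M ⊗ M* → End M`, i.e. with `k` factoring through a finitely generated
free module. So `x` kills `Tor₁(M, Tr M)` iff every `x • h` factors through a finitely generated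
free module, iff `x • id_M` does.
-/

open LinearMap Module TensorProduct

section Exact

variable {R : Type*} [CommRing R] {M N P T : Type*} [AddCommGroup M] [Module R M]
  [AddCommGroup N] [Module R N] [AddCommGroup P] [Module R P] [AddCommGroup T] [Module R T]
  {f : M →ₗ[R] N} {g : N →ₗ[R] P}

theorem Function.Exact.exists_comp_eq_of_comp_eq_zero (hfg : Function.Exact f g)
    (hg : Function.Surjective g) {κ : N →ₗ[R] T} (hκ : κ ∘ₗ f = 0) :
    ∃ ψ : P →ₗ[R] T, ψ ∘ₗ g = κ := by
  refine ⟨(range f).liftQ κ ?_ ∘ₗ (hfg.linearEquivOfSurjective hg).symm.toLinearMap, ?_⟩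
  · rintro _ ⟨m, rfl⟩
    exact LinearMap.congr_fun hκ m
  · ext n
    simp

theorem Function.Exact.dualMap (hfg : Function.Exact f g) (hg : Function.Surjective g) :
    Function.Exact g.dualMap f.dualMap := by
  intro φ
  constructor
  · intro hφ
    obtain ⟨ψ, hψ⟩ := hfg.exists_comp_eq_of_comp_eq_zero hg hφ
    exact ⟨ψ, hψ⟩
  · rintro ⟨ψ, rfl⟩
    ext m
    simp [hfg.apply_apply_eq_zero]

end Exact

theorem LinearMap.range_lTensor_eq_of_range_eq {R : Type*} [CommRing R] {N N' P Q : Type*}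
    [AddCommGroup N] [Module R N] [AddCommGroup N'] [Module R N'] [AddCommGroup P] [Module R P]
    [AddCommGroup Q] [Module R Q] {u : N →ₗ[R] P} {u' : N' →ₗ[R] P} (h : range u = range u') :
    range (u.lTensor Q) = range (u'.lTensor Q) := by
  rw [lTensor_range, h, ← lTensor_range]

section TensorDual

variable {R : Type*} [CommRing R] {P N : Type*} [AddCommGroup P] [Module R P]
  [AddCommGroup N] [Module R N]

theorem mem_range_dualTensorHom_iff (h : P →ₗ[R] N) :
    h ∈ range (dualTensorHom R P N) ↔
      ∃ (n : ℕ) (g' : P →ₗ[R] Fin n → R) (f' : (Fin n → R) →ₗ[R] N), f' ∘ₗ g' = h := by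
  constructor
  · rintro ⟨z, rfl⟩
    obtain ⟨S, rfl⟩ := exists_finset z
    let e := S.equivFin.symm
    refine ⟨S.card, LinearMap.pi fun i ↦ (e i).1.1,
      Fintype.linearCombination R fun i ↦ (e i).1.2, ?_⟩
    ext p
    simp only [coe_comp, Function.comp_apply, Fintype.linearCombination_apply, pi_apply, map_sum,
      coe_sum, Finset.sum_apply, dualTensorHom_apply]
    rw [← Finset.sum_coe_sort S, ← e.sum_comp]
  · rintro ⟨n, g', f', rfl⟩
    obtain ⟨z, hz⟩ := (dualTensorHom_bijective (R := R) (M := Fin n → R) (N := Fin n → R)).2 LinearMap.id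
    refine ⟨g'.dualMap.rTensor N (f'.lTensor _ z), ?_⟩
    rw [← LinearMap.comp_apply, dualTensorHom_comp_rTensor_dualMap, LinearMap.comp_apply,
      ← LinearMap.comp_apply (dualTensorHom _ _ _), dualTensorHom_comp_lTensor,
      LinearMap.comp_apply, hz]
    rfl

variable (R P N) in
noncomputable def tensorDualHom : N ⊗[R] Dual R P →ₗ[R] P →ₗ[R] N :=
  dualTensorHom R P N ∘ₗ (TensorProduct.comm R N (Dual R P)).toLinearMap

@[simp]
theorem tensorDualHom_tmul_apply (n : N) (φ : Dual R P) (p : P) :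
    tensorDualHom R P N (n ⊗ₜ φ) p = φ p • n :=
  rfl

theorem tensorDualHom_bijective [Module.Finite R P] [Projective R P] :
    Function.Bijective (tensorDualHom R P N) :=
  dualTensorHom_bijective.comp (TensorProduct.comm R N (Dual R P)).bijective

theorem range_tensorDualHom : range (tensorDualHom R P N) = range (dualTensorHom R P N) :=
  range_comp_of_range_eq_top _ (LinearEquiv.range _)

theorem tensorDualHom_lTensor_dualMap {P' : Type*} [AddCommGroup P'] [Module R P']
    (u : P' →ₗ[R] P) (w : N ⊗[R] Dual R P) :
    tensorDualHom R P' N (u.dualMap.lTensor N w) = tensorDualHom R P N w ∘ₗ u := by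
  induction w using TensorProduct.induction_on with
  | zero => simp
  | tmul n φ => ext; simp
  | add w w' hw hw' => simp only [map_add, hw, hw', add_comp]

end TensorDual

section Presentation

variable {R : Type*} [CommRing R] {M P₁ P₀ : Type*} [AddCommGroup M] [Module R M]
  [AddCommGroup P₁] [Module R P₁] [AddCommGroup P₀] [Module R P₀]
  [Module.Finite R P₁] [Projective R P₁] [Module.Finite R P₀] [Projective R P₀]
  {f : P₁ →ₗ[R] P₀} {g : P₀ →ₗ[R] M}

theorem Function.Exact.forall_smul_mem_range_lTensor_dualMap_iff (hfg : Function.Exact f g)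
    (hg : Function.Surjective g) (x : R) :
    (∀ z ∈ ker (f.dualMap.lTensor M), x • z ∈ range (g.dualMap.lTensor M)) ↔
      x • LinearMap.id ∈ range (tensorDualHom R M M) := by
  have hΦ₀ := tensorDualHom_bijective (R := R) (P := P₀) (N := M)
  constructor
  · intro H
    obtain ⟨z, hz⟩ := hΦ₀.2 g
    have hz_cycle : z ∈ ker (f.dualMap.lTensor M) := by
      apply tensorDualHom_bijective.1
      rw [map_zero, tensorDualHom_lTensor_dualMap, hz, hfg.linearMap_comp_eq_zero]
    obtain ⟨w, hw⟩ := H z hz_cycle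
    refine ⟨w, (LinearMap.cancel_right hg).1 ?_⟩
    rw [← tensorDualHom_lTensor_dualMap, hw, map_smul, hz, smul_comp, LinearMap.id_comp]
  · rintro ⟨w, hw⟩ z hz
    have hzf : tensorDualHom R P₀ M z ∘ₗ f = 0 := by
      rw [← tensorDualHom_lTensor_dualMap, mem_ker.1 hz, map_zero]
    obtain ⟨k, hk⟩ := hfg.exists_comp_eq_of_comp_eq_zero hg hzf
    refine ⟨k.dualMap.lTensor M w, hΦ₀.1 ?_⟩
    rw [tensorDualHom_lTensor_dualMap, tensorDualHom_lTensor_dualMap, hw, map_smul, ← hk,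
      smul_comp, LinearMap.id_comp, smul_comp]

end Presentation

universe v

open CategoryTheory Limits

theorem CategoryTheory.Projective.d_comp {C : Type*} [Category.{v} C] [HasZeroMorphisms C]
    [EnoughProjectives C] {X Y : C} (f : X ⟶ Y) [HasKernel f] : Projective.d f ≫ f = 0 :=
  (Category.assoc _ _ _).trans ((congrArg _ (kernel.condition f)).trans comp_zero)

namespace CategoryTheory.ProjectiveResolution

variable {C : Type*} [Category.{v} C] [Abelian C] [EnoughProjectives C] {X₁ X₀ Z : C}
  (d : X₁ ⟶ X₀)

noncomputable def ofPresentationComplex : ChainComplex C ℕ :=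
  ChainComplex.mk' X₀ X₁ d fun f ↦ ⟨_, Projective.d f, Projective.d_comp f⟩

theorem ofPresentationComplex_d_one_zero : (ofPresentationComplex d).d 1 0 = d := by
  simp [ofPresentationComplex]

theorem ofPresentationComplex_exactAt_succ (n : ℕ) :
    (ofPresentationComplex d).ExactAt (n + 1) := by
  rw [HomologicalComplex.exactAt_iff' _ (n + 2) (n + 1) n (by simp) (by simp)]
  refine ShortComplex.exact_of_iso ?_ (exact_d_f ((ofPresentationComplex d).d (n + 1) n))
  refine ShortComplex.isoMk (ChainComplex.mk'XIso X₀ X₁ d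
    (fun f ↦ ⟨_, Projective.d f, Projective.d_comp f⟩) n).symm (Iso.refl _) (Iso.refl _) ?_ ?_
  · exact ((Iso.inv_comp_eq _).2 (ChainComplex.mk'_d _ _ _ _ n)).trans (Category.comp_id _).symm
  · exact (Category.id_comp _).trans (Category.comp_id _).symm

variable [Projective X₁] [Projective X₀]

instance (n : ℕ) : Projective ((ofPresentationComplex d).X n) := by
  obtain (_ | _ | _ | n) := n
  · assumption
  · assumption
  · apply Projective.projective_over
  · apply Projective.projective_over

noncomputable def ofPresentation (π : X₀ ⟶ Z) [Epi π] (w : d ≫ π = 0)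
    (hexact : (ShortComplex.mk d π w).Exact) : ProjectiveResolution Z where
  complex := ofPresentationComplex d
  π := (ChainComplex.toSingle₀Equiv _ _).symm ⟨π, by rw [ofPresentationComplex_d_one_zero]; exact w⟩
  quasiIso := ⟨fun n ↦ by
    cases n
    · rw [ChainComplex.quasiIsoAt₀_iff, ShortComplex.quasiIso_iff_of_zeros']
      · refine (ShortComplex.exact_and_epi_g_iff_of_iso ?_).2 ⟨hexact, inferInstance⟩
        exact ShortComplex.isoMk (Iso.refl _) (Iso.refl _) (Iso.refl _)
          ((Category.id_comp _).trans
            ((ofPresentationComplex_d_one_zero d).symm.trans (Category.comp_id _).symm))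
          ((Category.id_comp π).trans
            ((ChainComplex.toSingle₀Equiv_symm_apply_f_zero (C := ofPresentationComplex d) π _).symm.trans
              (Category.comp_id _).symm))
      all_goals rfl
    · rw [quasiIsoAt_iff_exactAt']
      · apply ofPresentationComplex_exactAt_succ
      · apply ChainComplex.exactAt_succ_single_obj⟩

end CategoryTheory.ProjectiveResolution

theorem CategoryTheory.ShortComplex.mem_annihilator_moduleCat_homology_iff {R : Type*}
    [CommRing R] (S : ShortComplex (ModuleCat R)) (x : R) :
    x ∈ Module.annihilator R S.homology ↔ ∀ z ∈ ker S.g.hom, x • z ∈ range S.f.hom := by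
  rw [S.moduleCatHomologyIso.toLinearEquiv.annihilator_eq, Module.mem_annihilator]
  constructor
  · intro h z hz
    have : Submodule.Quotient.mk (x • (⟨z, hz⟩ : ker S.g.hom)) =
        (0 : ker S.g.hom ⧸ range S.moduleCatToCycles) := h (Submodule.Quotient.mk ⟨z, hz⟩)
    obtain ⟨w, hw⟩ := (Submodule.Quotient.mk_eq_zero _).1 this
    exact ⟨w, congrArg Subtype.val hw⟩
  · intro h a
    obtain ⟨⟨z, hz⟩, rfl⟩ := Submodule.Quotient.mk_surjective _ a
    obtain ⟨w, hw⟩ := h z hz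
    exact (Submodule.Quotient.mk_eq_zero _).2 ⟨w, Subtype.ext hw⟩

theorem CategoryTheory.ProjectiveResolution.mem_annihilator_tor_iff {R : Type u} [CommRing R]
    {X : ModuleCat.{u} R} (P : ProjectiveResolution X) (M : ModuleCat.{u} R) (n : ℕ) (x : R) :
    x ∈ Module.annihilator R (((Tor (ModuleCat.{u} R) (n + 1)).obj M).obj X) ↔
      ∀ z ∈ ker ((P.complex.d (n + 1) n).hom.lTensor M),
        x • z ∈ range ((P.complex.d (n + 2) (n + 1)).hom.lTensor M) := by
  have e : ((Tor (ModuleCat.{u} R) (n + 1)).obj M).obj X ≅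
      ((((MonoidalCategory.tensoringLeft _).obj M).mapHomologicalComplex _).obj P.complex).sc'
        (n + 2) (n + 1) n |>.homology :=
    P.isoLeftDerivedObj _ (n + 1) ≪≫ HomologicalComplex.homologyIsoSc' _ _ _ _ (by simp) (by simp)
  rw [e.toLinearEquiv.annihilator_eq, ShortComplex.mem_annihilator_moduleCat_homology_iff]
  rfl

section Transpose

variable {R : Type u} [CommRing R] {M P₁ P₀ : Type u} [AddCommGroup M] [Module R M]
  [AddCommGroup P₁] [Module R P₁] [AddCommGroup P₀] [Module R P₀]
  [Module.Finite R P₁] [Projective R P₁] [Module.Finite R P₀] [Projective R P₀]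

instance ModuleCat.projective_dual : CategoryTheory.Projective (ModuleCat.of R (Dual R P₀)) :=
  (IsProjective.iff_projective _).1 inferInstance

noncomputable def LinearMap.transposeResolution (f : P₁ →ₗ[R] P₀) :
    ProjectiveResolution (ModuleCat.of R (Dual R P₁ ⧸ range f.dualMap)) :=
  haveI : Epi (ModuleCat.ofHom (range f.dualMap).mkQ) :=
    (ModuleCat.epi_iff_surjective _).2 (Submodule.mkQ_surjective _)
  ProjectiveResolution.ofPresentation (ModuleCat.ofHom f.dualMap)
    (ModuleCat.ofHom (range f.dualMap).mkQ)
    (ModuleCat.hom_ext (exact_map_mkQ_range _).linearMap_comp_eq_zero)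
    (ModuleCat.shortComplex_exact _ (exact_map_mkQ_range _))

theorem Function.Exact.mem_annihilator_tor_one_transpose_iff {f : P₁ →ₗ[R] P₀}
    {g : P₀ →ₗ[R] M} (hfg : Function.Exact f g) (hg : Function.Surjective g) (x : R) :
    x ∈ Module.annihilator R (((Tor (ModuleCat.{u} R) 1).obj (ModuleCat.of R M)).obj
        (ModuleCat.of R (Dual R P₁ ⧸ range f.dualMap))) ↔
      ∀ z ∈ ker (f.dualMap.lTensor M), x • z ∈ range (g.dualMap.lTensor M) := by
  let P := f.transposeResolution
  have hd : P.complex.d 1 0 = ModuleCat.ofHom f.dualMap :=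
    ProjectiveResolution.ofPresentationComplex_d_one_zero _
  have hker : ker (P.complex.d 1 0).hom = ker f.dualMap := by rw [hd]; rfl
  have hrange : range (P.complex.d 2 1).hom = range g.dualMap :=
    ((P.exact_succ 0).moduleCat_range_eq_ker.trans hker).trans (hfg.dualMap hg).linearMap_ker_eq
  have := P.mem_annihilator_tor_iff (ModuleCat.of R M) 0 x
  rwa [range_lTensor_eq_of_range_eq hrange, hd] at this

end Transpose

theorem ann_tor_one_transpose_eq_factoring_set_general (R : Type u) [CommRing R]
    (M : Type u) [AddCommGroup M] [Module R M]
    (P₁ P₀ : Type u) [AddCommGroup P₁] [Module R P₁] [AddCommGroup P₀] [Module R P₀]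
    [Module.Finite R P₁] [Module.Projective R P₁]
    [Module.Finite R P₀] [Module.Projective R P₀]
    (f : P₁ →ₗ[R] P₀) (g : P₀ →ₗ[R] M)
    (hexact : Function.Exact f g) (hg : Function.Surjective g) :
    ∀ x : R,
      x ∈ Module.annihilator R
          (((Tor (ModuleCat.{u} R) 1).obj (ModuleCat.of R M)).obj
            (ModuleCat.of R ((Module.Dual R P₁) ⧸ LinearMap.range (LinearMap.dualMap f)))) ↔
      ∃ (n : ℕ) (g' : M →ₗ[R] (Fin n → R)) (f' : (Fin n → R) →ₗ[R] M),
        f' ∘ₗ g' = x • (LinearMap.id : M →ₗ[R] M) := by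
  intro x
  rw [hexact.mem_annihilator_tor_one_transpose_iff hg,
    hexact.forall_smul_mem_range_lTensor_dualMap_iff hg, range_tensorDualHom,
    mem_range_dualTensorHom_iff]

/-- Let `R` be a commutative Noetherian ring, `M` a finitely generated `R`-module, and
`P₁ → P₀ → M → 0` an exact sequence with `P₁, P₀` finitely generated projective; let
`Tr M = coker(f* : Hom(P₀,R) → Hom(P₁,R))` be the Auslander transpose.  Then the annihilator of
`Tor₁^R(M, Tr M)` equals the set of `x ∈ R` such that multiplication by `x` on `M` factors
through a finitely generated free `R`-module. -/
theorem ann_tor_one_transpose_eq_factoring_set (R : Type u) [CommRing R] [IsNoetherianRing R]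
    (M : Type u) [AddCommGroup M] [Module R M] [Module.Finite R M]
    (P₁ P₀ : Type u) [AddCommGroup P₁] [Module R P₁] [AddCommGroup P₀] [Module R P₀]
    [Module.Finite R P₁] [Module.Projective R P₁]
    [Module.Finite R P₀] [Module.Projective R P₀]
    (f : P₁ →ₗ[R] P₀) (g : P₀ →ₗ[R] M)
    (hexact : Function.Exact f g) (hg : Function.Surjective g) :
    ∀ x : R,
      x ∈ Module.annihilator R
          (((Tor (ModuleCat.{u} R) 1).obj (ModuleCat.of R M)).obj
            (ModuleCat.of R ((Module.Dual R P₁) ⧸ LinearMap.range (LinearMap.dualMap f)))) ↔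
      ∃ (n : ℕ) (g' : M →ₗ[R] (Fin n → R)) (f' : (Fin n → R) →ₗ[R] M),
        f' ∘ₗ g' = x • (LinearMap.id : M →ₗ[R] M) :=
  ann_tor_one_transpose_eq_factoring_set_general R M P₁ P₀ f g hexact hg
end
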